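/- Sharp weak-type identity: let f ≥ 0 be integrable on ℝ, and for λ > 0 set A_λ = {x : M f(x) > λ} and B_λ = {x : f(x) > λ}, where M is the uncentered Hardy–Littlewood maximal function. Then λ(|A_λ| + |B_λ|) ≤ ∫_{A_λ} f dt + ∫_{B_λ} f dt. -/

import Mathlib

/-!
With `G x = ∫₀ˣ f - λ x`, the average of `f` over `[a, b]` exceeds `λ` iff `G a < G b`, so `A_λ` is
the union of `E₋ = {x | G a < G x for some a < x}` and `E₊ = {x | G x < G b for some b > x}`.
By Riesz's rising sun lemma each of `E₊`, `E₋` is a disjoint union of intervals `(a, b)` with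
`G a ≤ G b`, i.e. `λ (b - a) ≤ ∫ₐᵇ f`, hence `λ |E±| ≤ ∫_{E±} f`. Inclusion–exclusion gives
`λ (|A_λ| + |E₊ ∩ E₋|) ≤ ∫_{A_λ} f + ∫_{E₊ ∩ E₋} f`, and the excess is controlled by
`∫_{E₊ ∩ E₋} f ≤ λ |E₊ ∩ E₋| + ∫ (f - λ)⁺` together with `∫_{B_λ} f = λ |B_λ| + ∫ (f - λ)⁺`.
-/

open MeasureTheory Set
open scoped ENNReal

/-- The uncentered Hardy-Littlewood maximal function over intervals. -/
noncomputable def M (f : ℝ → ℝ) (x : ℝ) : ℝ≥0∞ :=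
  ⨆ (a : ℝ) (b : ℝ) (_ : a ≤ x) (_ : x ≤ b) (_ : a < b),
    ENNReal.ofReal ((b - a)⁻¹ * ∫ t in a..b, f t)

open Filter

section OpenSubsetsOfReal

variable {U : Set ℝ}

theorem IsOpen.exists_Ioo_mem_subset_of_notMem (hU : IsOpen U)
    (hbelow : ∀ x, ∃ y ≤ x, y ∉ U) (habove : ∀ x, ∃ y ≥ x, y ∉ U) {x : ℝ} (hx : x ∈ U) :
    ∃ a b, x ∈ Ioo a b ∧ Ioo a b ⊆ U ∧ a ∉ U ∧ b ∉ U := by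
  have hclosed := hU.isClosed_compl
  obtain ⟨ha, ha'⟩ : sSup (Iic x ∩ Uᶜ) ∈ Iic x ∩ Uᶜ :=
    (isClosed_Iic.inter hclosed).csSup_mem (hbelow x) (bddAbove_Iic.mono inter_subset_left)
  obtain ⟨hb, hb'⟩ : sInf (Ici x ∩ Uᶜ) ∈ Ici x ∩ Uᶜ :=
    (isClosed_Ici.inter hclosed).csInf_mem (habove x) (bddBelow_Ici.mono inter_subset_left)
  refine ⟨_, _, ⟨ha.lt_of_ne (ne_of_mem_of_not_mem hx ha').symm,
    hb.lt_of_ne' (ne_of_mem_of_not_mem hx hb').symm⟩, fun y hy => ?_, ha', hb'⟩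
  by_contra hyU
  rcases le_total y x with hyx | hxy
  · exact hy.1.not_ge (le_csSup (bddAbove_Iic.mono inter_subset_left) ⟨hyx, hyU⟩)
  · exact hy.2.not_ge (csInf_le (bddBelow_Ici.mono inter_subset_left) ⟨hxy, hyU⟩)

theorem Ioo_eq_Ioo_of_notMem {a b c d : ℝ} (hab : Ioo a b ⊆ U) (ha : a ∉ U) (hb : b ∉ U)
    (hcd : Ioo c d ⊆ U) (hc : c ∉ U) (hd : d ∉ U) (hne : (Ioo a b ∩ Ioo c d).Nonempty) :
    Ioo a b = Ioo c d := by
  obtain ⟨z, ⟨haz, hzb⟩, hcz, hzd⟩ := hne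
  congr 1
  · exact le_antisymm (not_lt.1 fun hca => ha (hcd ⟨hca, haz.trans hzd⟩))
      (not_lt.1 fun hac => hc (hab ⟨hac, hcz.trans hzb⟩))
  · exact le_antisymm (not_lt.1 fun hdb => hd (hab ⟨haz.trans hzd, hdb⟩))
      (not_lt.1 fun hbd => hb (hcd ⟨hcz.trans hzb, hbd⟩))

theorem IsOpen.measure_le_of_forall_Ioo {μ ν : Measure ℝ} (hU : IsOpen U)
    (hbelow : ∀ x, ∃ y ≤ x, y ∉ U) (habove : ∀ x, ∃ y ≥ x, y ∉ U)
    (h : ∀ a b, a < b → Ioo a b ⊆ U → a ∉ U → b ∉ U → μ (Ioo a b) ≤ ν (Ioo a b)) :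
    μ U ≤ ν U := by
  set S : Set (Set ℝ) := {I | ∃ a b, a < b ∧ I = Ioo a b ∧ Ioo a b ⊆ U ∧ a ∉ U ∧ b ∉ U}
  have hSU : ⋃₀ S = U := by
    refine subset_antisymm (sUnion_subset ?_) fun x hx => ?_
    · rintro _ ⟨a, b, -, rfl, hab, -⟩
      exact hab
    obtain ⟨a, b, hx', hab, ha, hb⟩ := hU.exists_Ioo_mem_subset_of_notMem hbelow habove hx
    exact ⟨_, ⟨a, b, hx'.1.trans hx'.2, rfl, hab, ha, hb⟩, hx'⟩
  have hdisj : S.PairwiseDisjoint id := by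
    rintro _ ⟨a, b, -, rfl, hab, ha, hb⟩ _ ⟨c, d, -, rfl, hcd, hc, hd⟩ hne
    exact not_not.1 fun hnd =>
      hne (Ioo_eq_Ioo_of_notMem hab ha hb hcd hc hd (not_disjoint_iff_nonempty_inter.1 hnd))
  have hcount : S.Countable := hdisj.countable_of_isOpen
    (by rintro _ ⟨a, b, -, rfl, -⟩; exact isOpen_Ioo)
    (by rintro _ ⟨a, b, hab, rfl, -⟩; exact nonempty_Ioo.2 hab)
  have hmeas : ∀ I ∈ S, MeasurableSet I := by
    rintro _ ⟨a, b, -, rfl, -⟩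
    exact measurableSet_Ioo
  rw [← hSU, measure_sUnion hcount hdisj hmeas, measure_sUnion hcount hdisj hmeas]
  exact ENNReal.tsum_le_tsum fun ⟨_, a, b, hlt, rfl, hab, ha, hb⟩ => h a b hlt hab ha hb

end OpenSubsetsOfReal

section RisingSun

variable {α β : Type*} [LinearOrder α] [LinearOrder β]

def risesAfter (G : α → β) : Set α := {x | ∃ b, x < b ∧ G x < G b}

def risesBefore (G : α → β) : Set α := {x | ∃ a, a < x ∧ G a < G x}

theorem setOf_exists_le_le_lt_eq_risesBefore_union_risesAfter (G : α → β) :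
    {x | ∃ a b, a ≤ x ∧ x ≤ b ∧ G a < G b} = risesBefore G ∪ risesAfter G := by
  ext x
  constructor
  · rintro ⟨a, b, hax, hxb, hab⟩
    by_cases hxb' : G x < G b
    · exact Or.inr ⟨b, hxb.lt_of_ne (ne_of_apply_ne G hxb'.ne), hxb'⟩
    · have hax' : G a < G x := hab.trans_le (not_lt.1 hxb')
      exact Or.inl ⟨a, hax.lt_of_ne (ne_of_apply_ne G hax'.ne), hax'⟩
  · rintro (⟨a, hax, h⟩ | ⟨b, hxb, h⟩)
    · exact ⟨a, x, hax.le, le_rfl, h⟩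
    · exact ⟨x, b, le_rfl, hxb.le, h⟩

theorem notMem_risesAfter {G : α → β} {m : α} (h : ∀ y, m ≤ y → G y ≤ G m) :
    m ∉ risesAfter G :=
  fun ⟨b, hmb, hb⟩ => (h b hmb.le).not_gt hb

variable {G : ℝ → ℝ}

theorem isOpen_risesAfter (hG : Continuous G) : IsOpen (risesAfter G) := by
  have : risesAfter G = ⋃ b, Iio b ∩ {x | G x < G b} := by
    ext x
    simp [risesAfter]
  rw [this]
  exact isOpen_iUnion fun b => isOpen_Iio.inter (isOpen_lt hG continuous_const)

theorem exists_isMaxOn_Ici (hG : Continuous G) (htop : Tendsto G atTop atBot) (x : ℝ) :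
    ∃ m ≥ x, IsMaxOn G (Ici x) m := by
  obtain ⟨N, hN⟩ := (htop.eventually (eventually_le_atBot (G x))).exists_forall_of_atTop
  obtain ⟨m, hm, hmax⟩ := isCompact_Icc.exists_isMaxOn (s := Icc x (max x N))
    (nonempty_Icc.2 (le_max_left _ _)) hG.continuousOn
  refine ⟨m, hm.1, fun y hy => ?_⟩
  rcases le_or_gt y (max x N) with h | h
  · exact hmax ⟨hy, h⟩
  · exact (hN y ((le_max_right x N).trans h.le)).trans (hmax ⟨le_rfl, le_max_left _ _⟩)

theorem exists_ge_notMem_risesAfter (hG : Continuous G) (htop : Tendsto G atTop atBot)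
    (x : ℝ) : ∃ y ≥ x, y ∉ risesAfter G := by
  obtain ⟨m, hxm, hm⟩ := exists_isMaxOn_Ici hG htop x
  exact ⟨m, hxm, notMem_risesAfter fun _ hy => hm (hxm.trans hy)⟩

theorem exists_le_notMem_risesAfter (hG : Continuous G) (htop : Tendsto G atTop atBot)
    (hbot : Tendsto G atBot atTop) (x : ℝ) : ∃ y ≤ x, y ∉ risesAfter G := by
  obtain ⟨m, hxm, hm⟩ := exists_isMaxOn_Ici hG htop x
  obtain ⟨z, hz⟩ := (hbot.eventually_gt_atTop (G m)).exists
  obtain ⟨m', hzm', hm'⟩ := exists_isMaxOn_Ici hG htop z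
  refine ⟨m', not_lt.1 fun hxm' => ?_, notMem_risesAfter fun _ hy => hm' (hzm'.trans hy)⟩
  exact (hm hxm'.le).not_gt (hz.trans_le (hm' self_mem_Ici))

/-- **Riesz's rising sun lemma**. -/
theorem le_of_Ioo_subset_risesAfter (hG : Continuous G) {a b : ℝ} (hab : a < b)
    (hsub : Ioo a b ⊆ risesAfter G) (hb : b ∉ risesAfter G) : G a ≤ G b := by
  have hIoc : Ioc a b ⊆ {x | G x ≤ G b} := by
    rintro x ⟨hax, hxb⟩
    obtain ⟨m, ⟨hxm, hmb⟩, hmax⟩ := isCompact_Icc.exists_isMaxOn (nonempty_Icc.2 hxb)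
      hG.continuousOn
    obtain rfl | hmb := hmb.eq_or_lt
    · exact hmax ⟨le_rfl, hxb⟩
    obtain ⟨c, hmc, hGc⟩ := hsub ⟨hax.trans_le hxm, hmb⟩
    rcases le_or_gt c b with hcb | hbc
    · exact absurd (hmax ⟨hxm.trans hmc.le, hcb⟩) hGc.not_ge
    · exact absurd ⟨c, hbc, (hmax ⟨hxb, le_rfl⟩).trans_lt hGc⟩ hb
  rw [← (isClosed_le hG continuous_const).closure_subset_iff, closure_Ioc hab.ne] at hIoc
  exact hIoc (left_mem_Icc.2 hab.le)

variable {μ ν : Measure ℝ}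

theorem measure_risesAfter_le (hG : Continuous G) (htop : Tendsto G atTop atBot)
    (hbot : Tendsto G atBot atTop)
    (h : ∀ a b, a < b → G a ≤ G b → μ (Ioo a b) ≤ ν (Ioo a b)) :
    μ (risesAfter G) ≤ ν (risesAfter G) :=
  (isOpen_risesAfter hG).measure_le_of_forall_Ioo (exists_le_notMem_risesAfter hG htop hbot)
    (exists_ge_notMem_risesAfter hG htop) fun a b hab hsub _ hb =>
      h a b hab (le_of_Ioo_subset_risesAfter hG hab hsub hb)

theorem risesBefore_eq_preimage_neg (G : ℝ → ℝ) :
    risesBefore G = Neg.neg ⁻¹' risesAfter (fun y => -G (-y)) := by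
  ext x
  simp only [risesBefore, risesAfter, mem_ofPred_eq, mem_preimage, neg_neg, neg_lt_neg_iff]
  exact ⟨fun ⟨a, hax, h⟩ => ⟨-a, neg_lt_neg hax, by rwa [neg_neg]⟩,
    fun ⟨b, hxb, h⟩ => ⟨-b, neg_lt.1 hxb, h⟩⟩

theorem measure_risesBefore_le (hG : Continuous G) (htop : Tendsto G atTop atBot)
    (hbot : Tendsto G atBot atTop)
    (h : ∀ a b, a < b → G a ≤ G b → μ (Ioo a b) ≤ ν (Ioo a b)) :
    μ (risesBefore G) ≤ ν (risesBefore G) := by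
  set H : ℝ → ℝ := fun y => -G (-y)
  have hH : Continuous H := (hG.comp continuous_neg).neg
  have hHtop : Tendsto H atTop atBot :=
    tendsto_neg_atTop_atBot.comp (hbot.comp tendsto_neg_atTop_atBot)
  have hHbot : Tendsto H atBot atTop :=
    tendsto_neg_atBot_atTop.comp (htop.comp tendsto_neg_atBot_atTop)
  rw [risesBefore_eq_preimage_neg]
  refine ((isOpen_risesAfter hH).preimage continuous_neg).measure_le_of_forall_Ioo
    (fun x => ?_) (fun x => ?_) fun a b hab hsub ha _ => h a b hab ?_
  · obtain ⟨y, hy, hyH⟩ := exists_ge_notMem_risesAfter hH hHtop (-x)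
    exact ⟨-y, neg_le.1 hy, by rwa [mem_preimage, neg_neg]⟩
  · obtain ⟨y, hy, hyH⟩ := exists_le_notMem_risesAfter hH hHtop hHbot (-x)
    exact ⟨-y, le_neg_of_le_neg hy, by rwa [mem_preimage, neg_neg]⟩
  · have hsub' : Ioo (-b) (-a) ⊆ risesAfter H := fun y hy => by
      simpa using hsub (show -y ∈ Ioo a b from ⟨lt_neg.1 hy.2, neg_lt.1 hy.1⟩)
    simpa [H] using le_of_Ioo_subset_risesAfter hH (neg_lt_neg hab) hsub' ha

end RisingSun

section Measures

variable {α : Type*} [MeasurableSpace α] {μ ν : Measure α}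

theorem ofReal_integral_le_lintegral_ofReal {f : α → ℝ} (hf : Integrable f μ) :
    ENNReal.ofReal (∫ x, f x ∂μ) ≤ ∫⁻ x, ENNReal.ofReal (f x) ∂μ := by
  rw [integral_eq_lintegral_pos_part_sub_lintegral_neg_part hf]
  exact ENNReal.ofReal_le_of_le_toReal (sub_le_self _ ENNReal.toReal_nonneg)

theorem setLIntegral_ofReal_le (f : α → ℝ) (lam : ℝ) (s : Set α) :
    ∫⁻ x in s, ENNReal.ofReal (f x) ∂μ
      ≤ ENNReal.ofReal lam * μ s + ∫⁻ x, ENNReal.ofReal (f x - lam) ∂μ :=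
  calc ∫⁻ x in s, ENNReal.ofReal (f x) ∂μ
      ≤ ∫⁻ x in s, (ENNReal.ofReal lam + ENNReal.ofReal (f x - lam)) ∂μ :=
        lintegral_mono fun x => by simpa using ENNReal.ofReal_add_le (p := lam) (q := f x - lam)
    _ = ENNReal.ofReal lam * μ s + ∫⁻ x in s, ENNReal.ofReal (f x - lam) ∂μ := by
        rw [lintegral_add_left measurable_const, setLIntegral_const]
    _ ≤ ENNReal.ofReal lam * μ s + ∫⁻ x, ENNReal.ofReal (f x - lam) ∂μ := by
        gcongr
        exact Measure.restrict_le_self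

theorem setLIntegral_ofReal_setOf_lt {f : α → ℝ} (hf : AEMeasurable f μ) {lam : ℝ}
    (hlam : 0 ≤ lam) :
    ∫⁻ x in {x | lam < f x}, ENNReal.ofReal (f x) ∂μ
      = ENNReal.ofReal lam * μ {x | lam < f x} + ∫⁻ x, ENNReal.ofReal (f x - lam) ∂μ := by
  set B := {x | lam < f x}
  have hB : NullMeasurableSet B μ := nullMeasurableSet_lt aemeasurable_const hf
  calc ∫⁻ x in B, ENNReal.ofReal (f x) ∂μ
      = ∫⁻ x in B, (ENNReal.ofReal lam + ENNReal.ofReal (f x - lam)) ∂μ := by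
        refine lintegral_congr_ae ((ae_restrict_mem₀ hB).mono fun x (hx : lam < f x) => ?_)
        dsimp only
        rw [← ENNReal.ofReal_add hlam (sub_nonneg.2 hx.le), add_sub_cancel]
    _ = ENNReal.ofReal lam * μ B + ∫⁻ x in B, ENNReal.ofReal (f x - lam) ∂μ := by
        rw [lintegral_add_left measurable_const, setLIntegral_const]
    _ = ENNReal.ofReal lam * μ B + ∫⁻ x, ENNReal.ofReal (f x - lam) ∂μ := by
        rw [setLIntegral_eq_of_support_subset fun x hx => ?_]
        by_contra hxB
        exact hx (ENNReal.ofReal_eq_zero.2 (sub_nonpos.2 (not_lt.1 hxB)))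

theorem measure_union_le_add_of_inter_le [IsFiniteMeasure ν] {s t : Set α} {c : ℝ≥0∞}
    (ht : MeasurableSet t) (hs : μ s ≤ ν s) (ht' : μ t ≤ ν t)
    (hst : ν (s ∩ t) ≤ μ (s ∩ t) + c) : μ (s ∪ t) ≤ ν (s ∪ t) + c := by
  have hfin : μ (s ∩ t) ≠ ∞ :=
    (((measure_mono inter_subset_left).trans hs).trans_lt (measure_lt_top ν s)).ne
  rw [← ENNReal.add_le_add_iff_right hfin]
  calc μ (s ∪ t) + μ (s ∩ t) = μ s + μ t := measure_union_add_inter s ht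
    _ ≤ ν s + ν t := add_le_add hs ht'
    _ = ν (s ∪ t) + ν (s ∩ t) := (measure_union_add_inter s ht).symm
    _ ≤ ν (s ∪ t) + (μ (s ∩ t) + c) := by gcongr
    _ = ν (s ∪ t) + c + μ (s ∩ t) := by ring

end Measures

section MaximalFunction

variable {f : ℝ → ℝ} {lam : ℝ}

noncomputable def tiltedPrimitive (f : ℝ → ℝ) (lam x : ℝ) : ℝ :=
  (∫ t in (0 : ℝ)..x, f t) - lam * x

theorem tiltedPrimitive_sub (hf : Integrable f) (a b : ℝ) :
    tiltedPrimitive f lam b - tiltedPrimitive f lam a = (∫ t in a..b, f t) - lam * (b - a) := by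
  have := intervalIntegral.integral_interval_sub_left (a := 0) (b := b) (c := a)
    hf.intervalIntegrable hf.intervalIntegrable
  rw [tiltedPrimitive, tiltedPrimitive]
  linarith

theorem continuous_tiltedPrimitive (hf : Integrable f) : Continuous (tiltedPrimitive f lam) :=
  (intervalIntegral.continuous_primitive (fun _ _ => hf.intervalIntegrable) 0).sub
    (continuous_const.mul continuous_id)

theorem tendsto_tiltedPrimitive_atTop (hf : Integrable f) (hlam : 0 < lam) :
    Tendsto (tiltedPrimitive f lam) atTop atBot := by
  have hF := intervalIntegral_tendsto_integral_Ioi 0 hf.integrableOn tendsto_id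
  have hlin : Tendsto (fun x => -(lam * x)) atTop atBot :=
    tendsto_neg_atTop_atBot.comp (tendsto_id.const_mul_atTop hlam)
  exact (hF.add_atBot hlin).congr fun x => by rw [tiltedPrimitive, sub_eq_add_neg]; rfl

theorem tendsto_tiltedPrimitive_atBot (hf : Integrable f) (hlam : 0 < lam) :
    Tendsto (tiltedPrimitive f lam) atBot atTop := by
  have hF := (intervalIntegral_tendsto_integral_Iic 0 hf.integrableOn tendsto_id).neg
  have hlin : Tendsto (fun x => -(lam * x)) atBot atTop :=
    tendsto_neg_atBot_atTop.comp (tendsto_id.const_mul_atBot hlam)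
  exact (hF.add_atTop hlin).congr fun x => by
    rw [tiltedPrimitive, sub_eq_add_neg, intervalIntegral.integral_symm 0, neg_neg]; rfl

theorem ofReal_lt_M_iff (hf : Integrable f) (hlam : 0 ≤ lam) (x : ℝ) :
    ENNReal.ofReal lam < M f x ↔
      ∃ a b, a ≤ x ∧ x ≤ b ∧ tiltedPrimitive f lam a < tiltedPrimitive f lam b := by
  have haverage : ∀ a b, a < b → (lam < (b - a)⁻¹ * ∫ t in a..b, f t ↔
      tiltedPrimitive f lam a < tiltedPrimitive f lam b) := fun a b hab => by
    rw [← sub_pos (b := tiltedPrimitive f lam a), tiltedPrimitive_sub hf, sub_pos,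
      inv_mul_eq_div, lt_div_iff₀ (sub_pos.2 hab)]
  simp only [M, lt_iSup_iff, ENNReal.ofReal_lt_ofReal_iff_of_nonneg hlam]
  refine exists₂_congr fun a b => ⟨fun ⟨hax, hxb, hab, h⟩ => ⟨hax, hxb, (haverage a b hab).1 h⟩,
    fun ⟨hax, hxb, h⟩ => ?_⟩
  have hab : a < b := (hax.trans hxb).lt_of_ne (ne_of_apply_ne _ h.ne)
  exact ⟨hax, hxb, hab, (haverage a b hab).2 h⟩

theorem ofReal_mul_volume_Ioo_le (hf : Integrable f) (hlam : 0 ≤ lam) {a b : ℝ} (hab : a ≤ b)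
    (h : tiltedPrimitive f lam a ≤ tiltedPrimitive f lam b) :
    ENNReal.ofReal lam * volume (Ioo a b) ≤ ∫⁻ t in Ioo a b, ENNReal.ofReal (f t) := by
  rw [Real.volume_Ioo, ← ENNReal.ofReal_mul hlam]
  calc ENNReal.ofReal (lam * (b - a)) ≤ ENNReal.ofReal (∫ t in Ioo a b, f t) := by
        gcongr
        rw [← integral_Ioc_eq_integral_Ioo, ← intervalIntegral.integral_of_le hab]
        linarith [tiltedPrimitive_sub (lam := lam) hf a b]
    _ ≤ ∫⁻ t in Ioo a b, ENNReal.ofReal (f t) := ofReal_integral_le_lintegral_ofReal hf.integrableOn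

theorem ofReal_mul_volume_setOf_lt_M_le (hf : Integrable f) (hlam : 0 < lam) :
    ENNReal.ofReal lam * volume {x | ENNReal.ofReal lam < M f x}
      ≤ (∫⁻ t in {x | ENNReal.ofReal lam < M f x}, ENNReal.ofReal (f t))
        + ∫⁻ t, ENNReal.ofReal (f t - lam) := by
  set G := tiltedPrimitive f lam
  set μ : Measure ℝ := ENNReal.ofReal lam • volume
  set ν : Measure ℝ := volume.withDensity fun t => ENNReal.ofReal (f t)
  have : IsFiniteMeasure ν := isFiniteMeasure_withDensity_ofReal hf.2
  have hG : Continuous G := continuous_tiltedPrimitive hf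
  have htop := tendsto_tiltedPrimitive_atTop hf hlam
  have hbot := tendsto_tiltedPrimitive_atBot hf hlam
  have hIoo (a b : ℝ) (hab : a < b) (h : G a ≤ G b) : μ (Ioo a b) ≤ ν (Ioo a b) := by
    simpa [μ, ν, withDensity_apply'] using ofReal_mul_volume_Ioo_le hf hlam.le hab.le h
  have hA : {x | ENNReal.ofReal lam < M f x} = risesBefore G ∪ risesAfter G := by
    rw [← setOf_exists_le_le_lt_eq_risesBefore_union_risesAfter]
    exact Set.ext (ofReal_lt_M_iff hf hlam.le)
  have hunion := measure_union_le_add_of_inter_le (isOpen_risesAfter hG).measurableSet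
    (measure_risesBefore_le hG htop hbot hIoo) (measure_risesAfter_le hG htop hbot hIoo)
    (by simpa [μ, ν, withDensity_apply'] using setLIntegral_ofReal_le f lam _)
  simpa [μ, ν, withDensity_apply', hA] using hunion

end MaximalFunction

theorem sharp_weak_type_general (f : ℝ → ℝ) (hint : Integrable f)
    (lam : ℝ) (hlam : 0 < lam) :
    ENNReal.ofReal lam *
        (volume {x | ENNReal.ofReal lam < M f x} + volume {x | lam < f x})
      ≤ (∫⁻ t in {x | ENNReal.ofReal lam < M f x}, ENNReal.ofReal (f t))
        + ∫⁻ t in {x | lam < f x}, ENNReal.ofReal (f t) := by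
  rw [mul_add, setLIntegral_ofReal_setOf_lt hint.aemeasurable hlam.le]
  grw [ofReal_mul_volume_setOf_lt_M_le hint hlam]
  exact le_of_eq (by ring)

/-- Sharp weak-type inequality:
`λ(|A_λ| + |B_λ|) ≤ ∫_{A_λ} f + ∫_{B_λ} f`. -/
theorem sharp_weak_type (f : ℝ → ℝ) (hf : 0 ≤ f) (hint : Integrable f)
    (lam : ℝ) (hlam : 0 < lam) :
    ENNReal.ofReal lam *
        (volume {x | ENNReal.ofReal lam < M f x} + volume {x | lam < f x})
      ≤ (∫⁻ t in {x | ENNReal.ofReal lam < M f x}, ENNReal.ofReal (f t))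
        + ∫⁻ t in {x | lam < f x}, ENNReal.ofReal (f t) :=
  sharp_weak_type_general f hint lam hlam
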